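/- Let G be a plane graph that contains neither K4 nor C5 as a subgraph, with minimum degree δ(G) ≥ 3 and at least 5 vertices, and let B be a triangular block of G isomorphic to B4 (two triangles sharing an edge). Then each of the four boundary edges of B (the edges other than the shared edge) is incident in G to a face of length at least 6, and consequently 15·f(B) − 8·e(B) ≤ 15·(2 + 4/6) − 8·5 = 0. -/

import Mathlib

open SimpleGraph

namespace PlanarTuran

/-- Reversal of darts, as a permutation of the darts of `G`. -/
def dartRev {V : Type*} (G : SimpleGraph V) : Equiv.Perm G.Dart where
  toFun := Dart.symm
  invFun := Dart.symm
  left_inv d := Dart.symm_symm d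
  right_inv d := Dart.symm_symm d

/-- A rotation system (combinatorial embedding) of a simple graph `G`: a permutation of the
darts which fixes the initial vertex of every dart and is a single cycle on the darts leaving
each given vertex. -/
structure RotationSystem {V : Type*} (G : SimpleGraph V) where
  rot : Equiv.Perm G.Dart
  rot_fst : ∀ d : G.Dart, (rot d).fst = d.fst
  rot_cycle : ∀ d d' : G.Dart, d.fst = d'.fst → rot.SameCycle d d'

namespace RotationSystem

variable {V : Type*} {G : SimpleGraph V}

/-- The face permutation of the embedding: its orbits are the faces of the plane graph. -/
def facePerm (R : RotationSystem G) : Equiv.Perm G.Dart :=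
  (dartRev G).trans R.rot

/-- The face containing (the side of) a dart, encoded as the set of darts on its boundary walk. -/
def faceOf (R : RotationSystem G) (d : G.Dart) : Set G.Dart :=
  {d' | R.facePerm.SameCycle d d'}

/-- The length of the face incident to the dart `d`: the number of edge-sides on its
boundary walk (a bridge is counted twice). -/
noncomputable def faceLen (R : RotationSystem G) (d : G.Dart) : ℕ :=
  (R.faceOf d).ncard

/-- Darts lying on the same face. -/
def faceSetoid (R : RotationSystem G) : Setoid G.Dart :=
  ⟨R.facePerm.SameCycle,
   ⟨fun d => Equiv.Perm.SameCycle.refl _ d, fun h => h.symm, fun h h' => h.trans h'⟩⟩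

/-- The number of faces of the embedded graph (only counting faces having at least one edge on
their boundary). -/
noncomputable def numFaces (R : RotationSystem G) : ℕ :=
  Nat.card (Quotient R.faceSetoid)

/-- Darts on the same face, within the connected component `C`. -/
def faceSetoidIn (R : RotationSystem G) (C : G.ConnectedComponent) :
    Setoid {d : G.Dart // G.connectedComponentMk d.fst = C} :=
  ⟨fun d d' => R.facePerm.SameCycle d.1 d'.1,
   ⟨fun d => Equiv.Perm.SameCycle.refl _ _, fun h => h.symm, fun h h' => h.trans h'⟩⟩

/-- The rotation system is a *plane* (genus zero) embedding: every connected component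
containing at least one edge satisfies Euler's formula `n - e + f = 2`
(written here as `2*n + 2*f = 2*e + 4`, where `2*e` is the number of darts). -/
def GenusZero (R : RotationSystem G) : Prop :=
  ∀ C : G.ConnectedComponent, (∃ d : G.Dart, G.connectedComponentMk d.fst = C) →
    2 * Nat.card {v : V // G.connectedComponentMk v = C}
      + 2 * Nat.card (Quotient (R.faceSetoidIn C))
      = Nat.card {d : G.Dart // G.connectedComponentMk d.fst = C} + 4

/-- The contribution `f(e) = 1/l₁ + 1/l₂` of an edge `e` to the face number, where `l₁, l₂`
are the lengths of the faces incident to the two darts of `e` (for a bridge both darts lie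
on the same face, giving `f(e) = 2/l`). -/
noncomputable def fEdge [Fintype V] [DecidableEq V] [DecidableRel G.Adj]
    (R : RotationSystem G) (e : Sym2 V) : ℚ :=
  ∑ d ∈ Finset.univ.filter (fun d : G.Dart => d.edge = e), (1 : ℚ) / (R.faceLen d)

/-- The edges `e₁` and `e₂` both lie on a common `3`-face. -/
def shares3Face (R : RotationSystem G) (e₁ e₂ : Sym2 V) : Prop :=
  ∃ d₁ d₂ : G.Dart, d₁.edge = e₁ ∧ d₂.edge = e₂ ∧ R.faceLen d₁ = 3 ∧
    R.facePerm.SameCycle d₁ d₂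

/-- The triangular block generated by an edge `e`: the closure of `{e}` under adding all
edges of any `3`-face containing an edge already present. -/
def triBlockOf (R : RotationSystem G) (e : Sym2 V) : Set (Sym2 V) :=
  {e' | Relation.ReflTransGen R.shares3Face e e'}

/-- `B` is a triangular block of the plane graph `G`. -/
def IsTriangularBlock (R : RotationSystem G) (B : Set (Sym2 V)) : Prop :=
  ∃ e ∈ G.edgeSet, B = R.triBlockOf e

end RotationSystem

/-- A graph is planar iff it admits a genus-zero rotation system. -/
def _root_.SimpleGraph.IsPlanar {V : Type*} (G : SimpleGraph V) : Prop :=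
  ∃ R : RotationSystem G, R.GenusZero

/-- `G` contains no cycle of length `k`; equivalently, no subgraph isomorphic to `C_k`. -/
def _root_.SimpleGraph.CycleFree {V : Type*} (G : SimpleGraph V) (k : ℕ) : Prop :=
  ∀ ⦃v : V⦄ (w : G.Walk v v), w.IsCycle → w.length ≠ k

/-- A graph is 2-connected if it has at least 3 vertices and deleting any single vertex
leaves it connected. -/
def _root_.SimpleGraph.IsTwoConnected {V : Type*} (G : SimpleGraph V) : Prop :=
  3 ≤ Nat.card V ∧ ∀ v : V, (G.induce {u | u ≠ v}).Connected

/-- The set of vertices covered by a set `B` of edges. -/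
def blockVerts {V : Type*} (B : Set (Sym2 V)) : Set V :=
  {v | ∃ e ∈ B, v ∈ e}

/-- An edge set forming a single edge `K₂`. -/
def IsK2Block {V : Type*} (B : Set (Sym2 V)) : Prop :=
  ∃ u v : V, u ≠ v ∧ B = {s(u, v)}

/-- An edge set forming a triangle `K₃`. -/
def IsK3Block {V : Type*} (B : Set (Sym2 V)) : Prop :=
  ∃ u v w : V, u ≠ v ∧ u ≠ w ∧ v ≠ w ∧ B = {s(u, v), s(v, w), s(u, w)}

/-- An edge set forming `B₄`, two triangles `u v w` and `v w x` sharing the edge `v w`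
(`K₄` minus an edge). -/
def IsB4Block {V : Type*} (B : Set (Sym2 V)) : Prop :=
  ∃ u v w x : V, u ≠ v ∧ u ≠ w ∧ u ≠ x ∧ v ≠ w ∧ v ≠ x ∧ w ≠ x ∧
    B = {s(u, v), s(u, w), s(v, w), s(v, x), s(w, x)}

/-- An edge set forming `B₅ₐ`: a path `x₁x₂x₃x₄` plus an apex `y` joined to all of
`x₁, x₂, x₃, x₄`. -/
def IsB5aBlock {V : Type*} (B : Set (Sym2 V)) : Prop :=
  ∃ y x₁ x₂ x₃ x₄ : V, y ≠ x₁ ∧ y ≠ x₂ ∧ y ≠ x₃ ∧ y ≠ x₄ ∧ x₁ ≠ x₂ ∧ x₁ ≠ x₃ ∧ x₁ ≠ x₄ ∧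
    x₂ ≠ x₃ ∧ x₂ ≠ x₄ ∧ x₃ ≠ x₄ ∧
    B = {s(y, x₁), s(y, x₂), s(y, x₃), s(y, x₄), s(x₁, x₂), s(x₂, x₃), s(x₃, x₄)}

/-- An edge set forming `B₅ᵦ`, the wheel `W₄`: a `4`-cycle `x₁x₂x₃x₄` plus a center `c`
joined to all four cycle vertices. -/
def IsB5bBlock {V : Type*} (B : Set (Sym2 V)) : Prop :=
  ∃ c x₁ x₂ x₃ x₄ : V, c ≠ x₁ ∧ c ≠ x₂ ∧ c ≠ x₃ ∧ c ≠ x₄ ∧ x₁ ≠ x₂ ∧ x₁ ≠ x₃ ∧ x₁ ≠ x₄ ∧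
    x₂ ≠ x₃ ∧ x₂ ≠ x₄ ∧ x₃ ≠ x₄ ∧
    B = {s(c, x₁), s(c, x₂), s(c, x₃), s(c, x₄), s(x₁, x₂), s(x₂, x₃), s(x₃, x₄), s(x₄, x₁)}

end PlanarTuran

open PlanarTuran

/-! The argument is local at the block. With minimum degree `3` a face never turns straight back
(`rot` has no orbits of length `1` or `2`). The face through the dart `u → v` of the block is
then forced to be the triangle `u v w` (its edges lie in the block, and `ux` is not an edge of
it), and the face through `v → x` is the triangle `v x w`; passing to the mirror embedding fixes
this orientation. Walk the face on the other side of `uv`, `v → u → a₁ → ⋯`: minimum degree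
gives `a₁ ≠ v, w`, `K₄`-freeness gives `a₁ ≠ x`, and if that face were a triangle `ua₁` would
belong to the block. A face of length `4` or `5` produces a `C₅`, either the face itself or
together with edges of the block. So each boundary edge has `f(e) ≤ 1/6 + 1/3`, the spine has
`f(vw) ≤ 2/3`, and `15 f(B) ≤ 15 (4/2 + 2/3) = 40 = 8 e(B)`. -/

namespace Equiv.Perm

variable {α : Type*} [Finite α] {σ : Perm α} {x : α} {m : ℕ}

theorem card_le_of_pow_apply_eq (hm : 0 < m) (hx : (σ ^ m) x = x) (s : Finset α)
    (hs : ∀ y ∈ s, σ.SameCycle x y) : s.card ≤ m := by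
  classical
  have hper : Function.IsPeriodicPt σ m x := by
    rw [Function.IsPeriodicPt, Function.IsFixedPt, iterate_eq_pow, hx]
  calc s.card ≤ ((Finset.range m).image fun i => (σ ^ i) x).card :=
        Finset.card_le_card fun y hy => by
          obtain ⟨i, rfl⟩ := (hs y hy).exists_nat_pow_eq
          refine Finset.mem_image.2 ⟨i % m, Finset.mem_range.2 (Nat.mod_lt _ hm), ?_⟩
          simpa only [iterate_eq_pow] using hper.iterate_mod_apply i
    _ ≤ m := Finset.card_image_le.trans (Finset.card_range m).le

end Equiv.Perm

namespace SimpleGraph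

variable {V : Type*} {G : SimpleGraph V}

theorem CycleFree.not_adj_of_length_four_path (hC5 : G.CycleFree 5) {a b c d e : V}
    (hab : G.Adj a b) (hbc : G.Adj b c) (hcd : G.Adj c d) (hde : G.Adj d e)
    (hac : a ≠ c) (had : a ≠ d) (hbd : b ≠ d) (hbe : b ≠ e) (hce : c ≠ e) : ¬G.Adj e a := by
  intro hea
  refine hC5 (.cons hab (.cons hbc (.cons hcd (.cons hde (.cons hea .nil))))) ?_ rfl
  have := hab.ne; have := hbc.ne; have := hcd.ne; have := hde.ne; have := hea.ne
  simp_all [Walk.isCycle_def, Walk.isTrail_def, eq_comm]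

theorem CliqueFree.not_adj_of_diamond [DecidableEq V] (hK4 : G.CliqueFree 4) {u v w x : V}
    (huv : G.Adj u v) (huw : G.Adj u w) (hvw : G.Adj v w) (hvx : G.Adj v x) (hwx : G.Adj w x) :
    ¬G.Adj u x := fun hux =>
  hK4 {u, v, w, x} ((is3Clique_triple_iff.2 ⟨hvw, hvx, hwx⟩).insert (by simp [huv, huw, hux]))

end SimpleGraph

namespace PlanarTuran.RotationSystem

open Equiv.Perm

variable {V : Type*} {G : SimpleGraph V} (R : RotationSystem G)

theorem facePerm_apply (d : G.Dart) : R.facePerm d = R.rot d.symm := rfl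

@[simp]
theorem fst_facePerm (d : G.Dart) : (R.facePerm d).fst = d.snd := R.rot_fst d.symm

theorem facePerm_ne_self (d : G.Dart) : R.facePerm d ≠ d :=
  fun h => d.snd_ne_fst (by rw [← fst_facePerm, h])

theorem sameCycle_facePerm (d : G.Dart) : R.facePerm.SameCycle d (R.facePerm d) :=
  sameCycle_apply_right.2 (.refl _ _)

theorem faceOf_eq_of_sameCycle {d d' : G.Dart} (h : R.facePerm.SameCycle d d') :
    R.faceOf d = R.faceOf d' :=
  Set.ext fun _ => ⟨h.symm.trans, h.trans⟩

theorem faceLen_eq_of_sameCycle {d d' : G.Dart} (h : R.facePerm.SameCycle d d') :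
    R.faceLen d = R.faceLen d' := by
  rw [faceLen, faceLen, R.faceOf_eq_of_sameCycle h]

section MinDegree

variable [Fintype V] [DecidableRel G.Adj]

theorem rot_pow_apply_ne (d : G.Dart) {m : ℕ} (hm : 0 < m) (hmd : m < G.degree d.fst) :
    (R.rot ^ m) d ≠ d := by
  classical
  intro h
  refine hmd.not_ge ?_
  rw [← dart_fst_fiber_card_eq_degree]
  exact card_le_of_pow_apply_eq hm h _ fun d' hd' =>
    R.rot_cycle d d' (Finset.mem_filter.1 hd').2.symm

variable {R}

theorem snd_facePerm_ne_fst (hdeg : ∀ v : V, 3 ≤ G.degree v) (d : G.Dart) :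
    (R.facePerm d).snd ≠ d.fst := fun h => by
  have hsymm : R.facePerm d = d.symm := Dart.ext _ _ (Prod.ext (R.fst_facePerm d) h)
  exact R.rot_pow_apply_ne d.symm one_pos (Nat.lt_of_lt_of_le (by norm_num) (hdeg d.snd))
    (by rwa [pow_one, ← facePerm_apply])

theorem facePerm_symm_ne_symm (hdeg : ∀ v : V, 3 ≤ G.degree v) {d d' : G.Dart}
    (h : R.facePerm d = d') : R.facePerm d'.symm ≠ d.symm := by
  rw [← h, facePerm_apply, Dart.symm_symm, facePerm_apply, ← mul_apply, ← pow_two]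
  exact R.rot_pow_apply_ne d.symm two_pos (hdeg d.snd)

theorem three_le_faceLen (hdeg : ∀ v : V, 3 ≤ G.degree v) (d : G.Dart) :
    3 ≤ R.faceLen d := by
  have hne : R.facePerm (R.facePerm d) ≠ d := fun h =>
    snd_facePerm_ne_fst hdeg d (by rw [← fst_facePerm, h])
  have htri : ({d, R.facePerm d, R.facePerm (R.facePerm d)} : Set G.Dart).ncard = 3 :=
    Set.ncard_eq_three.2 ⟨_, _, _, (R.facePerm_ne_self d).symm, hne.symm,
      (R.facePerm_ne_self _).symm, rfl⟩
  rw [← htri]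
  refine Set.ncard_le_ncard ?_ (Set.toFinite _)
  rintro _ (rfl | rfl | rfl)
  · exact .refl _ _
  · exact R.sameCycle_facePerm d
  · exact sameCycle_apply_right.2 (R.sameCycle_facePerm d)

theorem one_div_faceLen_le (hdeg : ∀ v : V, 3 ≤ G.degree v) (d : G.Dart) :
    (1 : ℚ) / R.faceLen d ≤ 1 / 3 :=
  one_div_le_one_div_of_le (by norm_num) (by exact_mod_cast three_le_faceLen hdeg d)

variable [DecidableEq V]

theorem faceLen_eq_card_support (d : G.Dart) :
    R.faceLen d = (R.facePerm.cycleOf d).support.card := by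
  rw [faceLen, ← Set.ncard_coe_finset]
  congr 1
  ext d'
  rw [Finset.mem_coe, mem_support_cycleOf_iff]
  exact ⟨fun h => ⟨h, mem_support.2 (R.facePerm_ne_self d)⟩, And.left⟩

theorem facePerm_pow_faceLen (d : G.Dart) : (R.facePerm ^ R.faceLen d) d = d := by
  simpa [faceLen_eq_card_support] using
    (pow_mod_card_support_cycleOf_self_apply R.facePerm (R.faceLen d) d).symm

theorem facePerm_facePerm_facePerm {d : G.Dart} (hd3 : R.faceLen d = 3) :
    R.facePerm (R.facePerm (R.facePerm d)) = d := by
  simpa [hd3, pow_succ', mul_apply] using R.facePerm_pow_faceLen d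

theorem snd_facePerm_facePerm {d : G.Dart} (hd3 : R.faceLen d = 3) :
    (R.facePerm (R.facePerm d)).snd = d.fst := by
  rw [← fst_facePerm, facePerm_facePerm_facePerm hd3]

theorem facePerm_eq_of_faceLen_eq_three {d g : G.Dart} (hd3 : R.faceLen d = 3)
    (hg₁ : g.fst = (R.facePerm d).snd) (hg₂ : g.snd = d.fst) : R.facePerm g = d := by
  rw [← facePerm_facePerm_facePerm hd3]
  exact congrArg R.facePerm (Dart.ext _ _ (Prod.ext (by rw [hg₁, fst_facePerm])
    (by rw [hg₂, snd_facePerm_facePerm hd3])))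

theorem snd_facePerm_symm_ne (hdeg : ∀ v : V, 3 ≤ G.degree v) {d : G.Dart}
    (hd3 : R.faceLen d = 3) : (R.facePerm d.symm).snd ≠ (R.facePerm d).snd := fun h =>
  facePerm_symm_ne_symm hdeg (facePerm_facePerm_facePerm hd3) <| Dart.ext _ _ <| Prod.ext
    (by rw [fst_facePerm]; exact (snd_facePerm_facePerm hd3).symm)
    (by rw [h]; exact (fst_facePerm _ _).symm)

theorem fEdge_edge (d : G.Dart) : R.fEdge d.edge = 1 / R.faceLen d + 1 / R.faceLen d.symm := by
  have : Finset.univ.filter (fun d' : G.Dart => d'.edge = d.edge) = {d, d.symm} := by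
    ext d'
    simp [dart_edge_eq_iff]
  rw [fEdge, this, Finset.sum_pair d.symm_ne.symm]

theorem fEdge_le_two_thirds (hdeg : ∀ v : V, 3 ≤ G.degree v) (e : Sym2 V) :
    R.fEdge e ≤ 2 / 3 := by
  by_cases he : ∃ d : G.Dart, d.edge = e
  · obtain ⟨d, rfl⟩ := he
    rw [fEdge_edge]
    linarith [one_div_faceLen_le (R := R) hdeg d, one_div_faceLen_le (R := R) hdeg d.symm]
  · rw [fEdge, Finset.sum_eq_zero fun d hd => absurd ⟨d, (Finset.mem_filter.1 hd).2⟩ he]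
    norm_num

theorem fEdge_le_half (hdeg : ∀ v : V, 3 ≤ G.degree v) {e : Sym2 V}
    (he : ∃ d : G.Dart, d.edge = e ∧ 6 ≤ R.faceLen d) : R.fEdge e ≤ 1 / 2 := by
  obtain ⟨d, rfl, h6⟩ := he
  have : (1 : ℚ) / R.faceLen d ≤ 1 / 6 :=
    one_div_le_one_div_of_le (by norm_num) (by exact_mod_cast h6)
  rw [fEdge_edge]
  linarith [one_div_faceLen_le (R := R) hdeg d.symm]

end MinDegree

def mirror : RotationSystem G where
  rot := R.rot⁻¹
  rot_fst d := by simpa using (R.rot_fst (R.rot⁻¹ d)).symm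
  rot_cycle d d' h := sameCycle_inv.2 (R.rot_cycle d d' h)

theorem mirror_facePerm : R.mirror.facePerm = dartRev G * R.facePerm⁻¹ * (dartRev G)⁻¹ := rfl

theorem sameCycle_mirror_facePerm {d d' : G.Dart} :
    R.mirror.facePerm.SameCycle d d' ↔ R.facePerm.SameCycle d.symm d'.symm := by
  rw [mirror_facePerm, sameCycle_conj, sameCycle_inv]
  rfl

theorem faceLen_mirror (d : G.Dart) : R.mirror.faceLen d = R.faceLen d.symm := by
  have : R.mirror.faceOf d = Dart.symm '' R.faceOf d.symm := by
    rw [Dart.symm_involutive.image_eq_preimage_symm]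
    ext d'
    exact R.sameCycle_mirror_facePerm
  rw [faceLen, faceLen, this, Set.ncard_image_of_injective _ Dart.symm_involutive.injective]

theorem shares3Face_mirror : R.mirror.shares3Face = R.shares3Face := by
  ext e₁ e₂
  constructor <;> rintro ⟨d₁, d₂, rfl, rfl, h3, h⟩
  · refine ⟨d₁.symm, d₂.symm, d₁.edge_symm, d₂.edge_symm, ?_, R.sameCycle_mirror_facePerm.1 h⟩
    rwa [← faceLen_mirror]
  · refine ⟨d₁.symm, d₂.symm, d₁.edge_symm, d₂.edge_symm, ?_, ?_⟩
    · rwa [faceLen_mirror, Dart.symm_symm]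
    · rwa [sameCycle_mirror_facePerm, Dart.symm_symm, Dart.symm_symm]

variable {R} {B : Set (Sym2 V)}

theorem IsTriangularBlock.mirror (hB : R.IsTriangularBlock B) : R.mirror.IsTriangularBlock B := by
  simpa only [IsTriangularBlock, triBlockOf, shares3Face_mirror] using hB

theorem IsTriangularBlock.edge_mem_of_sameCycle (hB : R.IsTriangularBlock B) {d d' : G.Dart}
    (hd3 : R.faceLen d = 3) (hd : d.edge ∈ B) (h : R.facePerm.SameCycle d d') : d'.edge ∈ B := by
  obtain ⟨e₀, -, rfl⟩ := hB
  exact Relation.ReflTransGen.tail hd ⟨d, d', rfl, rfl, hd3, h⟩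

theorem IsTriangularBlock.exists_faceLen_eq_three (hB : R.IsTriangularBlock B) {e e' : Sym2 V}
    (he : e ∈ B) (he' : e' ∈ B) (hne : e ≠ e') : ∃ d : G.Dart, d.edge = e ∧ R.faceLen d = 3 := by
  obtain ⟨e₀, -, rfl⟩ := hB
  rcases Relation.ReflTransGen.cases_tail he with rfl | ⟨_, -, d₁, d₂, -, rfl, h3, h⟩
  · rcases Relation.ReflTransGen.cases_head he' with rfl | ⟨_, ⟨d₁, -, rfl, -, h3, -⟩, -⟩
    · exact absurd rfl hne
    · exact ⟨d₁, rfl, h3⟩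
  · exact ⟨d₂, rfl, (R.faceLen_eq_of_sameCycle h).symm.trans h3⟩

end PlanarTuran.RotationSystem

namespace PlanarTuran

variable {V : Type*}

/-- The edges of `B₄` with tips `u`, `x` and spine `v w`. -/
def b4Edges (u v w x : V) : Set (Sym2 V) := {s(u, v), s(u, w), s(v, w), s(v, x), s(w, x)}

variable {u v w x c : V}

theorem b4Edges_swap_spine (u v w x : V) : b4Edges u w v x = b4Edges u v w x := by
  ext
  simp only [b4Edges, Set.mem_insert_iff, Set.mem_singleton_iff, Sym2.eq_swap (a := w) (b := v)]
  tauto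

theorem b4Edges_swap_tips (u v w x : V) : b4Edges x v w u = b4Edges u v w x := by
  ext
  simp only [b4Edges, Set.mem_insert_iff, Set.mem_singleton_iff, Sym2.eq_swap (b := x),
    Sym2.eq_swap (b := u)]
  tauto

theorem eq_or_eq_of_mem_b4Edges_tip (hn : [u, v, w, x].Nodup) (h : s(u, c) ∈ b4Edges u v w x) :
    c = v ∨ c = w := by
  simp only [List.nodup_cons, List.mem_cons, List.not_mem_nil] at hn
  simp only [b4Edges, Set.mem_insert_iff, Set.mem_singleton_iff, Sym2.eq_iff] at h
  tauto

theorem eq_or_eq_or_eq_of_mem_b4Edges_spine (hcv : c ≠ v) (h : s(v, c) ∈ b4Edges u v w x) :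
    c = u ∨ c = w ∨ c = x := by
  simp only [b4Edges, Set.mem_insert_iff, Set.mem_singleton_iff, Sym2.eq_iff] at h
  tauto

theorem sum_toFinset_b4Edges [Finite V] [DecidableEq V] {M : Type*} [AddCommMonoid M]
    (f : Sym2 V → M) (hn : [u, v, w, x].Nodup) :
    ∑ e ∈ (b4Edges u v w x).toFinite.toFinset, f e =
      f s(u, v) + f s(u, w) + f s(v, w) + f s(v, x) + f s(w, x) := by
  simp only [List.nodup_cons, List.mem_cons, List.not_mem_nil] at hn
  have : (b4Edges u v w x).toFinite.toFinset = {s(u, v), s(u, w), s(v, w), s(v, x), s(w, x)} := by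
    ext; simp [b4Edges]
  rw [this, Finset.sum_insert, Finset.sum_insert, Finset.sum_insert, Finset.sum_insert,
    Finset.sum_singleton]
  · simp only [add_assoc]
  all_goals simp only [Finset.mem_insert, Finset.mem_singleton, Sym2.eq_iff]; tauto

end PlanarTuran

namespace PlanarTuran.RotationSystem

open Equiv.Perm

variable {V : Type*} [Fintype V] {G : SimpleGraph V} [DecidableRel G.Adj]
  {R : RotationSystem G} {u v w x : V}

theorem snd_facePerm_of_spine_tip (hdeg : ∀ v : V, 3 ≤ G.degree v) (hn : [u, v, w, x].Nodup)
    (hB : R.IsTriangularBlock (b4Edges u v w x)) {d : G.Dart} (hdv : d.fst = v) (hdu : d.snd = u)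
    (hd3 : R.faceLen d = 3) : (R.facePerm d).snd = w := by
  have hd : d.edge ∈ b4Edges u v w x := by simp [Dart.edge, hdu, hdv, b4Edges, Sym2.eq_swap]
  have hc : s(u, (R.facePerm d).snd) ∈ b4Edges u v w x := by
    simpa [Dart.edge, hdu] using hB.edge_mem_of_sameCycle hd3 hd (R.sameCycle_facePerm d)
  exact (eq_or_eq_of_mem_b4Edges_tip hn hc).resolve_left (hdv ▸ snd_facePerm_ne_fst hdeg d)

theorem faceLen_ne_three_of_b4 (hdeg : ∀ v : V, 3 ≤ G.degree v) (hn : [u, v, w, x].Nodup)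
    (hB : R.IsTriangularBlock (b4Edges u v w x)) {e : G.Dart} (hev : e.fst = v)
    (heu : e.snd = u) (hw : (R.facePerm e).snd ≠ w) : R.faceLen e ≠ 3 := fun h3 => by
  have he : e.edge ∈ b4Edges u v w x := by simp [Dart.edge, hev, heu, b4Edges, Sym2.eq_swap]
  have := hB.edge_mem_of_sameCycle h3 he (R.sameCycle_facePerm e)
  rw [Dart.edge, fst_facePerm, heu] at this
  exact (eq_or_eq_of_mem_b4Edges_tip hn this).elim (hev ▸ snd_facePerm_ne_fst hdeg e) hw

variable [DecidableEq V]

theorem snd_facePerm_of_tip_spine (hdeg : ∀ v : V, 3 ≤ G.degree v) (hn : [u, v, w, x].Nodup)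
    (hB : R.IsTriangularBlock (b4Edges u v w x)) {d : G.Dart} (hdu : d.fst = u) (hdv : d.snd = v)
    (hd3 : R.faceLen d = 3) : (R.facePerm d).snd = w := by
  have hd : d.edge ∈ b4Edges u v w x := by simp [Dart.edge, hdu, hdv, b4Edges]
  have hc : s(v, (R.facePerm d).snd) ∈ b4Edges u v w x := by
    simpa [Dart.edge, hdv] using hB.edge_mem_of_sameCycle hd3 hd (R.sameCycle_facePerm d)
  have hcv : (R.facePerm d).snd ≠ v := by simpa [hdv] using (R.facePerm d).snd_ne_fst
  rcases eq_or_eq_or_eq_of_mem_b4Edges_spine hcv hc with hcu | hcw | hcx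
  · exact absurd (hcu.trans hdu.symm) (snd_facePerm_ne_fst hdeg d)
  · exact hcw
  · have hxu : s(u, x) ∈ b4Edges u v w x := by
      have := hB.edge_mem_of_sameCycle hd3 hd (sameCycle_apply_right.2 (R.sameCycle_facePerm d))
      rwa [Dart.edge, fst_facePerm, hcx, snd_facePerm_facePerm hd3, hdu, Sym2.eq_swap] at this
    rcases eq_or_eq_of_mem_b4Edges_tip hn hxu with rfl | rfl <;> simp at hn

theorem exists_dart_spine_tip_faceLen_eq_three (hdeg : ∀ v : V, 3 ≤ G.degree v)
    (hn : [u, v, w, x].Nodup) (hB : R.IsTriangularBlock (b4Edges u v w x)) {d : G.Dart}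
    (hdu : d.fst = u) (hdv : d.snd = v) (hd3 : R.faceLen d = 3) :
    ∃ p : G.Dart, p.fst = v ∧ p.snd = x ∧ R.faceLen p = 3 := by
  have hn' : [x, v, w, u].Nodup := (List.nodup_reverse.2 hn).perm ((List.Perm.swap v w [u]).cons x)
  obtain ⟨p, hpe, hp3⟩ := hB.exists_faceLen_eq_three (e := s(v, x)) (e' := s(u, v))
    (by simp [b4Edges]) (by simp [b4Edges]) (by simp at hn; simp; tauto)
  rcases dart_edge_eq_mk'_iff.1 hpe with hp | hp
  · exact ⟨p, congrArg Prod.fst hp, congrArg Prod.snd hp, hp3⟩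
  · -- the faces of `x → v` and of `u → v` would both continue with `v → w`
    have hFp := snd_facePerm_of_tip_spine hdeg hn' ((b4Edges_swap_tips u v w x).symm ▸ hB)
      (congrArg Prod.fst hp) (congrArg Prod.snd hp) hp3
    have hFd := snd_facePerm_of_tip_spine hdeg hn hB hdu hdv hd3
    have hpd : p = d := R.facePerm.injective <| Dart.ext _ _ <| Prod.ext
      (by simp [hdv, congrArg Prod.snd hp]) (hFp.trans hFd.symm)
    have hxu : x = u := by rw [← hdu, ← hpd]; exact (congrArg Prod.fst hp).symm
    simp [hxu] at hn

theorem faceLen_ne_four_of_b4 (hdeg : ∀ v : V, 3 ≤ G.degree v) (hC5 : G.CycleFree 5)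
    (hn : [u, v, w, x].Nodup) (hvw : G.Adj v w) (hwu : G.Adj w u) (hxw : G.Adj x w)
    {e : G.Dart} (hev : e.fst = v) (heu : e.snd = u) (hw : (R.facePerm e).snd ≠ w)
    (hlast : ∀ g, R.facePerm g = e → g.fst ≠ w) : R.faceLen e ≠ 4 := by
  intro h4
  have hv : (R.facePerm e).snd ≠ v := hev ▸ snd_facePerm_ne_fst hdeg e
  set g₁ := R.facePerm e
  set g₂ := R.facePerm g₁
  set g₃ := R.facePerm g₂
  have hcyc : R.facePerm g₃ = e := by
    simpa [g₃, g₂, g₁, h4, pow_succ', mul_apply] using R.facePerm_pow_faceLen e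
  have hg₁ : G.Adj u g₁.snd := by simpa [g₁, heu] using g₁.adj
  have hg₂ : G.Adj g₁.snd g₂.snd := by simpa [g₂] using g₂.adj
  have hg₃ : G.Adj g₂.snd v := by simpa [g₃, ← hev, ← hcyc] using g₃.adj
  have hu₂ : g₂.snd ≠ u := fun h =>
    snd_facePerm_ne_fst (R := R) hdeg g₃ (by rw [hcyc, heu, ← h]; exact (R.fst_facePerm g₂).symm)
  have hw₂ : g₂.snd ≠ w := fun h => hlast g₃ hcyc (by simp [h, g₃])
  simp only [List.nodup_cons, List.mem_cons, List.not_mem_nil] at hn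
  by_cases hx₂ : g₂.snd = x
  · -- the 5-cycle `u a₁ x w v`, writing `aᵢ` for `gᵢ.snd`
    exact hC5.not_adj_of_length_four_path hg₁ (hx₂ ▸ hg₂) hxw hvw.symm (by tauto) (by tauto) hw
      hv (by tauto) (hev ▸ heu ▸ e.adj)
  · -- the 5-cycle `w u a₁ a₂ v`
    exact hC5.not_adj_of_length_four_path hwu hg₁ hg₂ hg₃ (Ne.symm hw) (Ne.symm hw₂)
      (Ne.symm hu₂) (by tauto) hv hvw

theorem faceLen_ne_five_of_b4 (hdeg : ∀ v : V, 3 ≤ G.degree v) (hC5 : G.CycleFree 5)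
    (hn : [u, v, w, x].Nodup) (hwu : G.Adj w u) (hvx : G.Adj v x) (hxw : G.Adj x w)
    {e : G.Dart} (hev : e.fst = v) (heu : e.snd = u) (hw : (R.facePerm e).snd ≠ w)
    (hx : (R.facePerm e).snd ≠ x) (hlast : ∀ g, R.facePerm g = e → g.fst ≠ w) :
    R.faceLen e ≠ 5 := by
  intro h5
  have hv : (R.facePerm e).snd ≠ v := hev ▸ snd_facePerm_ne_fst hdeg e
  set g₁ := R.facePerm e
  set g₂ := R.facePerm g₁
  set g₃ := R.facePerm g₂
  set g₄ := R.facePerm g₃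
  have hcyc : R.facePerm g₄ = e := by
    simpa [g₄, g₃, g₂, g₁, h5, pow_succ', mul_apply] using R.facePerm_pow_faceLen e
  have hg₁ : G.Adj u g₁.snd := by simpa [g₁, heu] using g₁.adj
  have hg₂ : G.Adj g₁.snd g₂.snd := by simpa [g₂] using g₂.adj
  have hg₃ : G.Adj g₂.snd g₃.snd := by simpa [g₃] using g₃.adj
  have hg₄ : G.Adj g₃.snd v := by simpa [g₄, ← hev, ← hcyc] using g₄.adj
  have hu₂ : g₂.snd ≠ u := by simpa [g₁, heu] using snd_facePerm_ne_fst hdeg g₁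
  have h₁₃ : g₃.snd ≠ g₁.snd := by simpa [g₂] using snd_facePerm_ne_fst hdeg g₂
  have hu₃ : g₃.snd ≠ u := fun h =>
    snd_facePerm_ne_fst (R := R) hdeg g₄ (by rw [hcyc, heu, ← h]; exact (R.fst_facePerm g₃).symm)
  have hw₃ : g₃.snd ≠ w := fun h => hlast g₄ hcyc (by simp [h, g₄])
  simp only [List.nodup_cons, List.mem_cons, List.not_mem_nil] at hn
  by_cases hv₂ : g₂.snd = v
  · -- the 5-cycle `w u a₁ v x`
    exact hC5.not_adj_of_length_four_path hwu hg₁ (hv₂ ▸ hg₂) hvx (Ne.symm hw) (by tauto)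
      (by tauto) (by tauto) hx hxw
  · -- the face itself is the 5-cycle `v u a₁ a₂ a₃`
    exact hC5.not_adj_of_length_four_path (hev ▸ heu ▸ e.adj) hg₁ hg₂ hg₃ (Ne.symm hv)
      (Ne.symm hv₂) (Ne.symm hu₂) (Ne.symm hu₃) (Ne.symm h₁₃) hg₄

theorem six_le_faceLen_symm_of_tip_spine (hdeg : ∀ v : V, 3 ≤ G.degree v) (hK4 : G.CliqueFree 4)
    (hC5 : G.CycleFree 5) (hn : [u, v, w, x].Nodup) (hB : R.IsTriangularBlock (b4Edges u v w x))
    {d : G.Dart} (hdu : d.fst = u) (hdv : d.snd = v) (hd3 : R.faceLen d = 3) :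
    6 ≤ R.faceLen d.symm := by
  have hn' : [x, v, w, u].Nodup := (List.nodup_reverse.2 hn).perm ((List.Perm.swap v w [u]).cons x)
  obtain ⟨p, hpv, hpx, hp3⟩ := exists_dart_spine_tip_faceLen_eq_three hdeg hn hB hdu hdv hd3
  have hFd := snd_facePerm_of_tip_spine hdeg hn hB hdu hdv hd3
  have hFp := snd_facePerm_of_spine_tip hdeg hn' ((b4Edges_swap_tips u v w x).symm ▸ hB) hpv hpx hp3
  have huv : G.Adj u v := hdu ▸ hdv ▸ d.adj
  have hvw : G.Adj v w := by simpa [hdv, hFd] using (R.facePerm d).adj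
  have hwu : G.Adj w u := by
    simpa [hFd, snd_facePerm_facePerm hd3, hdu] using (R.facePerm (R.facePerm d)).adj
  have hvx : G.Adj v x := hpv ▸ hpx ▸ p.adj
  have hxw : G.Adj x w := by simpa [hpx, hFp] using (R.facePerm p).adj
  set e := d.symm
  have hev : e.fst = v := hdv
  have heu : e.snd = u := hdu
  have hw₁ : (R.facePerm e).snd ≠ w := hFd ▸ snd_facePerm_symm_ne hdeg hd3
  have hx₁ : (R.facePerm e).snd ≠ x := fun h => hK4.not_adj_of_diamond huv hwu.symm hvw hvx
    hxw.symm (by simpa [h, heu] using (R.facePerm e).adj)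
  -- the dart `w → v` is followed by `v → x`, not by `e`
  have hlast : ∀ g, R.facePerm g = e → g.fst ≠ w := fun g hg hgw => by
    have hgp := facePerm_eq_of_faceLen_eq_three hp3 (hgw.trans hFp.symm)
      (by rw [← fst_facePerm, hg, hev, hpv])
    simp [← heu, ← hpx, ← hg, hgp] at hn
  have := three_le_faceLen (R := R) hdeg e
  have := faceLen_ne_three_of_b4 hdeg hn hB hev heu hw₁
  have := faceLen_ne_four_of_b4 hdeg hC5 hn hvw hwu hxw hev heu hw₁ hlast
  have := faceLen_ne_five_of_b4 hdeg hC5 hn hwu hvx hxw hev heu hw₁ hx₁ hlast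
  omega

theorem exists_dart_six_le_faceLen_of_b4 (hdeg : ∀ v : V, 3 ≤ G.degree v)
    (hK4 : G.CliqueFree 4) (hC5 : G.CycleFree 5) (hn : [u, v, w, x].Nodup)
    (hB : R.IsTriangularBlock (b4Edges u v w x)) :
    ∃ d : G.Dart, d.edge = s(u, v) ∧ 6 ≤ R.faceLen d := by
  obtain ⟨d, hde, hd3⟩ := hB.exists_faceLen_eq_three (e := s(u, v)) (e' := s(v, w))
    (by simp [b4Edges]) (by simp [b4Edges]) (by simp at hn; simp; tauto)
  refine ⟨d.symm, by rw [Dart.edge_symm, hde], ?_⟩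
  rcases dart_edge_eq_mk'_iff.1 hde with hd | hd
  · exact six_le_faceLen_symm_of_tip_spine hdeg hK4 hC5 hn hB (congrArg Prod.fst hd)
      (congrArg Prod.snd hd) hd3
  · -- in the mirror image the dart `d.symm` runs from `u` to `v` along a triangle
    simpa [faceLen_mirror] using six_le_faceLen_symm_of_tip_spine hdeg hK4 hC5 hn hB.mirror
      (d := d.symm) (congrArg Prod.snd hd) (congrArg Prod.fst hd) (by simpa [faceLen_mirror])

theorem b4_boundary_six_le_faceLen (hdeg : ∀ v : V, 3 ≤ G.degree v) (hK4 : G.CliqueFree 4)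
    (hC5 : G.CycleFree 5) (hn : [u, v, w, x].Nodup) (hB : R.IsTriangularBlock (b4Edges u v w x)) :
    ∀ e ∈ ({s(u, v), s(u, w), s(v, x), s(w, x)} : Set (Sym2 V)),
      ∃ d : G.Dart, d.edge = e ∧ 6 ≤ R.faceLen d := by
  have hn_spine : [u, w, v, x].Nodup := hn.perm ((List.Perm.swap w v [x]).cons u)
  have hn_tips : [x, v, w, u].Nodup :=
    (List.nodup_reverse.2 hn).perm ((List.Perm.swap v w [u]).cons x)
  rintro e (rfl | rfl | rfl | rfl)
  · exact exists_dart_six_le_faceLen_of_b4 hdeg hK4 hC5 hn hB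
  · exact exists_dart_six_le_faceLen_of_b4 hdeg hK4 hC5 hn_spine
      ((b4Edges_swap_spine u v w x).symm ▸ hB)
  · rw [Sym2.eq_swap]
    exact exists_dart_six_le_faceLen_of_b4 hdeg hK4 hC5 hn_tips
      ((b4Edges_swap_tips u v w x).symm ▸ hB)
  · rw [Sym2.eq_swap]
    exact exists_dart_six_le_faceLen_of_b4 hdeg hK4 hC5
      (hn_tips.perm ((List.Perm.swap w v [u]).cons x))
      ((b4Edges_swap_tips u w v x).symm ▸ (b4Edges_swap_spine u v w x).symm ▸ hB)

theorem discharge_b4Edges_nonpos (hdeg : ∀ v : V, 3 ≤ G.degree v) (hn : [u, v, w, x].Nodup)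
    (hlong : ∀ e ∈ ({s(u, v), s(u, w), s(v, x), s(w, x)} : Set (Sym2 V)),
      ∃ d : G.Dart, d.edge = e ∧ 6 ≤ R.faceLen d) :
    15 * ∑ e ∈ (b4Edges u v w x).toFinite.toFinset, R.fEdge e
      - 8 * ((b4Edges u v w x).ncard : ℚ) ≤ 0 := by
  have hcard : (b4Edges u v w x).ncard = 5 := by
    rw [Set.ncard_eq_toFinset_card _ (Set.toFinite _), Finset.card_eq_sum_ones,
      sum_toFinset_b4Edges _ hn]
  rw [sum_toFinset_b4Edges _ hn, hcard]
  have := fEdge_le_half hdeg (hlong s(u, v) (by simp))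
  have := fEdge_le_half hdeg (hlong s(u, w) (by simp))
  have := fEdge_le_half hdeg (hlong s(v, x) (by simp))
  have := fEdge_le_half hdeg (hlong s(w, x) (by simp))
  have := fEdge_le_two_thirds (R := R) hdeg s(v, w)
  push_cast
  linarith

end PlanarTuran.RotationSystem

open PlanarTuran.RotationSystem

theorem b4_block_boundary_faces_and_discharging_general {V : Type*} [Fintype V] [DecidableEq V]
    (G : SimpleGraph V) [DecidableRel G.Adj]
    (R : PlanarTuran.RotationSystem G)
    (hK4 : G.CliqueFree 4) (hC5 : G.CycleFree 5)
    (hdeg : ∀ v : V, 3 ≤ G.degree v)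
    (B : Set (Sym2 V)) (hB : R.IsTriangularBlock B)
    (u v w x : V)
    (h₁ : u ≠ v) (h₂ : u ≠ w) (h₃ : u ≠ x) (h₄ : v ≠ w) (h₅ : v ≠ x) (h₆ : w ≠ x)
    (hBeq : B = {s(u, v), s(u, w), s(v, w), s(v, x), s(w, x)}) :
    (∀ e' ∈ ({s(u, v), s(u, w), s(v, x), s(w, x)} : Set (Sym2 V)),
      ∃ d : G.Dart, d.edge = e' ∧ 6 ≤ R.faceLen d) ∧
    15 * (∑ e ∈ B.toFinite.toFinset, R.fEdge e) - 8 * (B.ncard : ℚ) ≤ 0 ∧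
    (15 : ℚ) * (2 + 4 / 6) - 8 * 5 = 0 := by
  obtain rfl : B = b4Edges u v w x := hBeq
  have hn : [u, v, w, x].Nodup := by simp [*]
  have hlong := b4_boundary_six_le_faceLen hdeg hK4 hC5 hn hB
  exact ⟨hlong, discharge_b4Edges_nonpos hdeg hn hlong, by norm_num⟩

/-- In a plane graph with no `K₄` and no `C₅`, minimum degree at least `3`
and at least `5` vertices, if `B` is a triangular block isomorphic to `B₄` (triangles `uvw`
and `vwx` sharing the edge `vw`), then each of the four boundary edges `uv, uw, vx, wx` is
incident in `G` to a face of length at least `6`, and consequently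
`15 f(B) - 8 e(B) ≤ 15 (2 + 4/6) - 8 · 5 = 0`. -/
theorem b4_block_boundary_faces_and_discharging {V : Type*} [Fintype V] [DecidableEq V]
    (G : SimpleGraph V) [DecidableRel G.Adj]
    (R : PlanarTuran.RotationSystem G) (hplane : R.GenusZero)
    (hK4 : G.CliqueFree 4) (hC5 : G.CycleFree 5)
    (hdeg : ∀ v : V, 3 ≤ G.degree v) (hn5 : 5 ≤ Fintype.card V)
    (B : Set (Sym2 V)) (hB : R.IsTriangularBlock B)
    (u v w x : V)
    (h₁ : u ≠ v) (h₂ : u ≠ w) (h₃ : u ≠ x) (h₄ : v ≠ w) (h₅ : v ≠ x) (h₆ : w ≠ x)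
    (hBeq : B = {s(u, v), s(u, w), s(v, w), s(v, x), s(w, x)}) :
    (∀ e' ∈ ({s(u, v), s(u, w), s(v, x), s(w, x)} : Set (Sym2 V)),
      ∃ d : G.Dart, d.edge = e' ∧ 6 ≤ R.faceLen d) ∧
    15 * (∑ e ∈ B.toFinite.toFinset, R.fEdge e) - 8 * (B.ncard : ℚ) ≤ 0 ∧
    (15 : ℚ) * (2 + 4 / 6) - 8 * 5 = 0 :=
  b4_block_boundary_faces_and_discharging_general G R hK4 hC5 hdeg B hB u v w x h₁ h₂ h₃ h₄ h₅ h₆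
    hBeq
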